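/- For all bounded metric spaces $X$ and $Y$, the Gromov–Hausdorff distance satisfies $d_{GH}(X,Y) \geq d_{GH}(\mathbf{U}(X), \mathbf{U}(Y))$. -/
import Mathlib

open Real

/-- `R ⊆ X × Y` is a correspondence. -/
def IsCorr {X Y : Type*} (R : Set (X × Y)) : Prop :=
  (∀ x, ∃ y, (x, y) ∈ R) ∧ (∀ y, ∃ x, (x, y) ∈ R)

/-- Distortion of a relation between metric spaces. -/
noncomputable def corrDis {X Y : Type*} [MetricSpace X] [MetricSpace Y]
    (R : Set (X × Y)) : ℝ :=
  sSup {r | ∃ p ∈ R, ∃ q ∈ R, r = |dist p.1 q.1 - dist p.2 q.2|}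

/-- Gromov–Hausdorff distance via correspondences. -/
noncomputable def ghCorrDist (X Y : Type*) [MetricSpace X] [MetricSpace Y] : ℝ :=
  (1 / 2) * sInf {r | ∃ R : Set (X × Y), IsCorr R ∧ r = corrDis R}

/-- The chain pseudo-ultrametric `u_X`. -/
noncomputable def uChain {X : Type*} [MetricSpace X] (x y : X) : ℝ :=
  sInf {r | ∃ (n : ℕ) (c : Fin (n + 1) → X), c 0 = x ∧ c (Fin.last n) = y ∧
    r = ⨆ i : Fin n, dist (c i.castSucc) (c i.succ)}

/-- Distortion of a relation measured with the chain pseudo-ultrametrics `u_X`, `u_Y`.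
Since the Gromov--Hausdorff distance (via correspondences) between the metric quotients
`U(X)`, `U(Y)` equals half the infimum of these distortions over correspondences,
`ghCorrDistU X Y = d_GH(U(X), U(Y))`. -/
noncomputable def corrDisU {X Y : Type*} [MetricSpace X] [MetricSpace Y]
    (R : Set (X × Y)) : ℝ :=
  sSup {r | ∃ p ∈ R, ∃ q ∈ R, r = |uChain p.1 q.1 - uChain p.2 q.2|}

noncomputable def ghCorrDistU (X Y : Type*) [MetricSpace X] [MetricSpace Y] : ℝ :=
  (1 / 2) * sInf {r | ∃ R : Set (X × Y), IsCorr R ∧ r = corrDisU R}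

lemma chainSet_nonempty {X : Type*} [MetricSpace X] (x y : X) :
    Set.Nonempty {r | ∃ (n : ℕ) (c : Fin (n + 1) → X), c 0 = x ∧ c (Fin.last n) = y ∧
      r = ⨆ i : Fin n, dist (c i.castSucc) (c i.succ)} := by
  refine ⟨dist x y, 1, ![x, y], rfl, rfl, ?_⟩
  rw [ciSup_unique (ι := Fin 1)]
  norm_num [Fin.castSucc_zero]

lemma chainSet_nonneg {X : Type*} [MetricSpace X] (x y : X) :
    ∀ r ∈ {r | ∃ (n : ℕ) (c : Fin (n + 1) → X), c 0 = x ∧ c (Fin.last n) = y ∧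
      r = ⨆ i : Fin n, dist (c i.castSucc) (c i.succ)}, 0 ≤ r := by
  rintro r ⟨n, c, _, _, rfl⟩
  exact Real.iSup_nonneg fun i => dist_nonneg

lemma uChain_nonneg {X : Type*} [MetricSpace X] (x y : X) : 0 ≤ uChain x y :=
  le_csInf (chainSet_nonempty x y) (chainSet_nonneg x y)

lemma uChain_le_dist {X : Type*} [MetricSpace X] (x y : X) : uChain x y ≤ dist x y := by
  apply csInf_le ⟨0, fun r hr => chainSet_nonneg x y r hr⟩
  refine ⟨1, ![x, y], rfl, rfl, ?_⟩
  rw [ciSup_unique (ι := Fin 1)]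
  norm_num [Fin.castSucc_zero]

lemma uChain_key {X Y : Type*} [MetricSpace X] [MetricSpace Y]
    (r : X → Y → Prop) (hsurj : ∀ b, ∃ a, r a b) (D : ℝ)
    (hD : ∀ a b a' b', r a b → r a' b' → |dist a a' - dist b b'| ≤ D)
    (x x' : X) (y y' : Y) (h1 : r x y) (h2 : r x' y') :
    uChain x x' ≤ uChain y y' + D := by
  have h : uChain x x' - D ≤ uChain y y' := by
    apply le_csInf (chainSet_nonempty y y')
    rintro s ⟨n, c, hc0, hcl, rfl⟩
    match n with
    | 0 =>
      have hyy : y' = y := by rw [← hc0, ← hcl]; rfl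
      have : (⨆ i : Fin 0, dist (c i.castSucc) (c i.succ)) = 0 := Real.iSup_of_isEmpty _
      rw [this]
      have hd := hD x y x' y' h1 h2
      have h1' : dist x x' ≤ dist y y' + D := by
        have := abs_le.1 hd; linarith [this.2]
      have h2' : dist y y' = 0 := by rw [hyy]; simp
      linarith [uChain_le_dist x x']
    | Nat.succ m =>
      set n := m + 1 with hn
      -- lifted chain
      set b : Fin (n + 1) → X := fun i =>
        if (i : ℕ) = 0 then x else if i = Fin.last n then x' else Classical.choose (hsurj (c i)) with hb
      have hpair : ∀ i, r (b i) (c i) := by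
        intro i
        by_cases hi0 : (i : ℕ) = 0
        · have : i = 0 := Fin.ext hi0
          simp only [hb, hi0, if_true]
          rw [this, hc0]; exact h1
        · by_cases hil : i = Fin.last n
          · simp only [hb, hi0, if_false, hil, if_true]
            rw [hil] at *
            rw [hcl]; exact h2
          · simp only [hb, hi0, if_false, hil, if_false]
            exact Classical.choose_spec (hsurj (c i))
      have hb0 : b 0 = x := by simp [hb]
      have hbl : b (Fin.last n) = x' := by
        simp [hb, hn]
      have hmem : (⨆ i : Fin n, dist (b i.castSucc) (b i.succ)) ∈
          {s | ∃ (k : ℕ) (e : Fin (k + 1) → X), e 0 = x ∧ e (Fin.last k) = x' ∧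
            s = ⨆ i : Fin k, dist (e i.castSucc) (e i.succ)} :=
        ⟨n, b, hb0, hbl, rfl⟩
      have h1' : uChain x x' ≤ ⨆ i : Fin n, dist (b i.castSucc) (b i.succ) :=
        csInf_le ⟨0, fun s hs => chainSet_nonneg x x' s hs⟩ hmem
      have h2' : (⨆ i : Fin n, dist (b i.castSucc) (b i.succ)) ≤
          (⨆ i : Fin n, dist (c i.castSucc) (c i.succ)) + D := by
        apply ciSup_le
        intro i
        have hstep : dist (b i.castSucc) (b i.succ) ≤ dist (c i.castSucc) (c i.succ) + D := by
          have := abs_le.1 (hD _ _ _ _ (hpair i.castSucc) (hpair i.succ))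
          linarith [this.2]
        have hle : dist (c i.castSucc) (c i.succ) ≤ ⨆ j : Fin n, dist (c j.castSucc) (c j.succ) :=
          le_ciSup (f := fun j : Fin n => dist (c j.castSucc) (c j.succ)) (Set.Finite.bddAbove (Set.finite_range _)) i
        linarith
      linarith
  linarith

lemma corrDisU_nonneg {X Y : Type*} [MetricSpace X] [MetricSpace Y] (R : Set (X × Y)) :
    0 ≤ corrDisU R :=
  Real.sSup_nonneg (by rintro r ⟨p, _, q, _, rfl⟩; exact abs_nonneg _)

lemma corrDisU_le_corrDis {X Y : Type*} [MetricSpace X] [MetricSpace Y]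
    (hX : Bornology.IsBounded (Set.univ : Set X))
    (hY : Bornology.IsBounded (Set.univ : Set Y))
    (R : Set (X × Y)) (hR : IsCorr R) : corrDisU R ≤ corrDis R := by
  obtain ⟨CX, hCX⟩ := Metric.isBounded_iff.1 hX
  obtain ⟨CY, hCY⟩ := Metric.isBounded_iff.1 hY
  rcases Set.eq_empty_or_nonempty R with hRe | ⟨p0, hp0⟩
  · subst hRe
    simp [corrDisU, corrDis]
  have hbdd : BddAbove {r | ∃ p ∈ R, ∃ q ∈ R, r = |dist p.1 q.1 - dist p.2 q.2|} := by
    refine ⟨max CX CY, ?_⟩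
    rintro r ⟨p, _, q, _, rfl⟩
    have h1 : dist p.1 q.1 ≤ CX := hCX (Set.mem_univ _) (Set.mem_univ _)
    have h2 : dist p.2 q.2 ≤ CY := hCY (Set.mem_univ _) (Set.mem_univ _)
    have := dist_nonneg (x := p.1) (y := q.1)
    have := dist_nonneg (x := p.2) (y := q.2)
    rw [abs_le]
    exact ⟨by linarith [le_max_right CX CY], by linarith [le_max_left CX CY]⟩
  have hDmem : ∀ p ∈ R, ∀ q ∈ R, |dist p.1 q.1 - dist p.2 q.2| ≤ corrDis R := by
    intro p hp q hq
    exact le_csSup hbdd ⟨p, hp, q, hq, rfl⟩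
  have hD0 : 0 ≤ corrDis R := by
    have := hDmem p0 hp0 p0 hp0
    have := abs_nonneg (dist p0.1 p0.1 - dist p0.2 p0.2)
    linarith
  apply Real.sSup_le _ hD0
  rintro s ⟨p, hp, q, hq, rfl⟩
  have hkey1 : uChain p.1 q.1 ≤ uChain p.2 q.2 + corrDis R := by
    apply uChain_key (fun a b => (a, b) ∈ R) hR.2 _ _ _ _ _ _ hp hq
    intro a b a' b' hab hab'
    exact hDmem (a, b) hab (a', b') hab'
  have hkey2 : uChain p.2 q.2 ≤ uChain p.1 q.1 + corrDis R := by
    apply uChain_key (fun b a => (a, b) ∈ R) hR.1 _ _ _ _ _ _ hp hq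
    intro b a b' a' hab hab'
    rw [abs_sub_comm]
    exact hDmem (a, b) hab (a', b') hab'
  rw [abs_le]
  constructor <;> linarith

/-- For bounded metric spaces, `d_GH(X, Y) ≥ d_GH(U(X), U(Y))`. -/
theorem stmt1 (X Y : Type*) [MetricSpace X] [MetricSpace Y]
    (hX : Bornology.IsBounded (Set.univ : Set X))
    (hY : Bornology.IsBounded (Set.univ : Set Y)) :
    ghCorrDistU X Y ≤ ghCorrDist X Y := by
  by_cases hP : ∃ R : Set (X × Y), IsCorr R
  · unfold ghCorrDistU ghCorrDist
    have h2 : (0 : ℝ) ≤ 1 / 2 := by norm_num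
    refine mul_le_mul_of_nonneg_left ?_ h2
    obtain ⟨R0, hR0⟩ := hP
    refine le_csInf ⟨corrDis R0, R0, hR0, rfl⟩ ?_
    rintro b ⟨R, hR, rfl⟩
    calc sInf {r | ∃ R : Set (X × Y), IsCorr R ∧ r = corrDisU R}
        ≤ corrDisU R := csInf_le ⟨0, by rintro r ⟨S, _, rfl⟩; exact corrDisU_nonneg S⟩
          ⟨R, hR, rfl⟩
      _ ≤ corrDis R := corrDisU_le_corrDis hX hY R hR
  · have hA : {r | ∃ R : Set (X × Y), IsCorr R ∧ r = corrDisU R} = ∅ :=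
      Set.eq_empty_iff_forall_notMem.2 fun r ⟨R, hR, _⟩ => hP ⟨R, hR⟩
    have hB : {r | ∃ R : Set (X × Y), IsCorr R ∧ r = corrDis R} = ∅ :=
      Set.eq_empty_iff_forall_notMem.2 fun r ⟨R, hR, _⟩ => hP ⟨R, hR⟩
    unfold ghCorrDistU ghCorrDist
    rw [hA, hB]
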